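/- Let a > 0, let Q ∈ Δ^γ_0 be a cube with centre c_Q, and let x ∈ Q. If B(x,r) ∈ 𝓑_a is an admissible ball centred at x, then r ≤ (2+n)·a·m(c_Q). -/

import Mathlib

open MeasureTheory Metric Set
open scoped ENNReal NNReal BigOperators

noncomputable section

/-- The gaussian measure `dγ(x) = (2π)^{-n/2} exp(-|x|²/2) dx` on `ℝⁿ`. -/
def gaussMeasure (n : ℕ) : Measure (EuclideanSpace ℝ (Fin n)) :=
  volume.withDensity fun x =>
    ENNReal.ofReal ((2 * Real.pi) ^ (-(n : ℝ) / 2) * Real.exp (-‖x‖ ^ 2 / 2))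

/-- `m(x) = min {1, 1/‖x‖}`. -/
def mfun {n : ℕ} (x : EuclideanSpace ℝ (Fin n)) : ℝ :=
  if ‖x‖ ≤ 1 then 1 else ‖x‖⁻¹

/-- Ornstein–Uhlenbeck (Mehler) semigroup `e^{-tL} u (x)`. -/
def mehler (n : ℕ) (u : EuclideanSpace ℝ (Fin n) → ℝ) (t : ℝ)
    (x : EuclideanSpace ℝ (Fin n)) : ℝ :=
  ∫ y, u (Real.exp (-t) • x + Real.sqrt (1 - Real.exp (-2 * t)) • y) ∂gaussMeasure n

/-- The gaussian conical square function `S_a u (x)`. -/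
def Sfun (n : ℕ) (a : ℝ) (u : EuclideanSpace ℝ (Fin n) → ℝ)
    (x : EuclideanSpace ℝ (Fin n)) : ℝ≥0∞ :=
  (∫⁻ t in Set.Ioo (0 : ℝ) (a * mfun x),
      (∫⁻ y in ball x t,
        (gaussMeasure n (ball y t))⁻¹ *
          ENNReal.ofReal ((t * ‖fderiv ℝ (mehler n u (t ^ 2)) y‖) ^ 2) ∂gaussMeasure n) /
        ENNReal.ofReal t) ^ (1 / 2 : ℝ)

/-- The gaussian non-tangential maximal function `T*_{(A,a)} u (x)`. -/
def Tstar (n : ℕ) (A a : ℝ) (u : EuclideanSpace ℝ (Fin n) → ℝ)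
    (x : EuclideanSpace ℝ (Fin n)) : ℝ≥0∞ :=
  ⨆ (y : EuclideanSpace ℝ (Fin n)) (t : ℝ) (_ : dist y x < A * t) (_ : 0 < t)
      (_ : t < a * mfun x),
    ((gaussMeasure n (ball y (A * t)))⁻¹ *
        ∫⁻ z in ball y (A * t), ENNReal.ofReal ((mehler n u (t ^ 2) z) ^ 2) ∂gaussMeasure n) ^
      (1 / 2 : ℝ)

/-- The admissible (gaussian) Hardy–Littlewood maximal function `M*_a f (x)`. -/
def Mstar (n : ℕ) (a : ℝ) (f : EuclideanSpace ℝ (Fin n) → ℝ)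
    (x : EuclideanSpace ℝ (Fin n)) : ℝ≥0∞ :=
  ⨆ (r : ℝ) (_ : 0 < r) (_ : r ≤ a * mfun x),
    (gaussMeasure n (ball x r))⁻¹ *
      ∫⁻ y in ball x r, ENNReal.ofReal |f y| ∂gaussMeasure n

/-- The admissible cone `Γ^{(A,a)}_x(γ)`. -/
def cone (n : ℕ) (A a : ℝ) (x : EuclideanSpace ℝ (Fin n)) :
    Set (EuclideanSpace ℝ (Fin n) × ℝ) :=
  {p | dist p.1 x < A * p.2 ∧ 0 < p.2 ∧ p.2 < a * mfun x}

/-- The modified admissible cone `Γ̃^{(A,a)}_x(γ)`. -/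
def coneT (n : ℕ) (A a : ℝ) (x : EuclideanSpace ℝ (Fin n)) :
    Set (EuclideanSpace ℝ (Fin n) × ℝ) :=
  {p | dist p.1 x < A * p.2 ∧ 0 < p.2 ∧ p.2 < a * mfun p.1}

/-- The dyadic cube `2^{-k}(v + [0,1)ⁿ)` of scale `k`. -/
def dyadicCube (n k : ℕ) (v : Fin n → ℤ) : Set (EuclideanSpace ℝ (Fin n)) :=
  {x | ∀ i, x i ∈ Set.Ico ((2 : ℝ) ^ (-(k : ℤ)) * v i) ((2 : ℝ) ^ (-(k : ℤ)) * (v i + 1))}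

/-- The centre of the dyadic cube `2^{-k}(v + [0,1)ⁿ)`. -/
def cubeCenter (n k : ℕ) (v : Fin n → ℤ) : EuclideanSpace ℝ (Fin n) :=
  WithLp.toLp 2 (fun i => (2 : ℝ) ^ (-(k : ℤ)) * (v i + 1 / 2))

/-- The layers `L_0 = [-1,1)ⁿ`, `L_l = [-2^l,2^l)ⁿ \ [-2^{l-1},2^{l-1})ⁿ`. -/
def layer (n : ℕ) : ℕ → Set (EuclideanSpace ℝ (Fin n))
  | 0 => {x | ∀ i, x i ∈ Set.Ico (-1 : ℝ) 1}
  | (l + 1) =>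
      {x | ∀ i, x i ∈ Set.Ico (-(2 : ℝ) ^ (l + 1)) ((2 : ℝ) ^ (l + 1))} \
        {x | ∀ i, x i ∈ Set.Ico (-(2 : ℝ) ^ l) ((2 : ℝ) ^ l)}

/-- The cube `α ∘ Q` with the same centre as `Q = 2^{-k}(v + [0,1)ⁿ)` and `α` times
its side-length. -/
def scaledCube (n k : ℕ) (v : Fin n → ℤ) (α : ℝ) : Set (EuclideanSpace ℝ (Fin n)) :=
  {x | ∀ i, x i ∈ Set.Ico (cubeCenter n k v i - α * (2 : ℝ) ^ (-(k : ℤ)) / 2)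
      (cubeCenter n k v i + α * (2 : ℝ) ^ (-(k : ℤ)) / 2)}

/-- The Ornstein–Uhlenbeck operator `Lf(x) = -Δf(x) + x·∇f(x)`. -/
def OU (n : ℕ) (f : EuclideanSpace ℝ (Fin n) → ℂ) (x : EuclideanSpace ℝ (Fin n)) : ℂ :=
  -(∑ i : Fin n, iteratedFDeriv ℝ 2 f x ![EuclideanSpace.single i 1, EuclideanSpace.single i 1]) +
    fderiv ℝ f x x

/-! Both `x` and `c_Q` lie in the layer `L_l`. Every point of `L_l` has norm at most
`√n · 2^l ≤ (2 + n) · 2^(l-1)`, and for `l ≥ 1` norm at least `2^(l-1)`. Hence on `L_l`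
`m ≤ 2^(1-l)` and `m ≥ 2^(1-l) / (2 + n)`, so `m` varies by at most the factor `2 + n`. -/

lemma EuclideanSpace.norm_le_sqrt_card_mul {ι : Type*} [Fintype ι] {C : ℝ} (hC : 0 ≤ C)
    {y : EuclideanSpace ℝ ι} (hy : ∀ i, ‖y i‖ ≤ C) : ‖y‖ ≤ √(Fintype.card ι) * C := by
  rw [EuclideanSpace.norm_eq, ← Real.sqrt_sq hC, ← Real.sqrt_mul (Nat.cast_nonneg _)]
  refine Real.sqrt_le_sqrt ?_
  calc ∑ i, ‖y i‖ ^ 2 ≤ ∑ _i : ι, C ^ 2 :=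
        Finset.sum_le_sum fun i _ => pow_le_pow_left₀ (norm_nonneg _) (hy i) 2
    _ = Fintype.card ι * C ^ 2 := by simp

lemma mfun_le_one {n : ℕ} (y : EuclideanSpace ℝ (Fin n)) : mfun y ≤ 1 := by
  unfold mfun
  split_ifs with hy1
  · rfl
  · exact inv_le_one_of_one_le₀ (not_le.mp hy1).le

lemma mfun_le_inv_of_le_norm {n : ℕ} {C : ℝ} (hC : 0 < C) {y : EuclideanSpace ℝ (Fin n)}
    (hy : C ≤ ‖y‖) : mfun y ≤ C⁻¹ := by
  unfold mfun
  split_ifs with hy1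
  · exact one_le_inv₀ hC |>.mpr (hy.trans hy1)
  · exact inv_anti₀ hC hy

lemma inv_le_mfun_of_norm_le {n : ℕ} {C : ℝ} (hC : 1 ≤ C) {y : EuclideanSpace ℝ (Fin n)}
    (hy : ‖y‖ ≤ C) : C⁻¹ ≤ mfun y := by
  unfold mfun
  split_ifs with hy1
  · exact inv_le_one_of_one_le₀ hC
  · exact inv_anti₀ (by linarith) hy

lemma abs_apply_le_of_mem_layer {n l : ℕ} {y : EuclideanSpace ℝ (Fin n)} (hy : y ∈ layer n l)
    (i : Fin n) : |y i| ≤ 2 ^ l := by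
  have hyi : y i ∈ Ico (-(2 : ℝ) ^ l) (2 ^ l) := by
    cases l with
    | zero => simpa using hy i
    | succ k => exact hy.1 i
  exact abs_le.mpr ⟨hyi.1, hyi.2.le⟩

lemma norm_le_of_mem_layer {n l : ℕ} {y : EuclideanSpace ℝ (Fin n)} (hy : y ∈ layer n l) :
    ‖y‖ ≤ √n * 2 ^ l := by
  simpa using EuclideanSpace.norm_le_sqrt_card_mul (by positivity) (abs_apply_le_of_mem_layer hy)

lemma pow_le_norm_of_mem_layer_succ {n k : ℕ} {y : EuclideanSpace ℝ (Fin n)}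
    (hy : y ∈ layer n (k + 1)) : 2 ^ k ≤ ‖y‖ := by
  obtain ⟨i, hi⟩ : ∃ i, y i ∉ Ico (-(2 : ℝ) ^ k) (2 ^ k) := by
    simpa only [mem_ofPred_eq, not_forall] using hy.2
  have hyi : 2 ^ k ≤ |y i| := by
    rw [mem_Ico, not_and_or, not_le, not_lt] at hi
    rcases hi with hi | hi
    · exact le_abs.mpr (Or.inr (by linarith))
    · exact le_abs.mpr (Or.inl hi)
  exact hyi.trans (by simpa using PiLp.norm_apply_le y i)

lemma mfun_le_of_mem_layer {n l : ℕ} {y : EuclideanSpace ℝ (Fin n)} (hy : y ∈ layer n l) :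
    mfun y ≤ 2 / 2 ^ l := by
  cases l with
  | zero => simpa using (mfun_le_one y).trans one_le_two
  | succ k =>
    rw [pow_succ', div_mul_cancel_left₀ (two_ne_zero' ℝ)]
    exact mfun_le_inv_of_le_norm (by positivity) (pow_le_norm_of_mem_layer_succ hy)

lemma div_le_mfun_of_mem_layer {n l : ℕ} {y : EuclideanSpace ℝ (Fin n)} (hy : y ∈ layer n l) :
    2 / ((2 + n) * 2 ^ l) ≤ mfun y := by
  have hsqrt : √n ≤ (2 + n) / 2 := by
    nlinarith [Real.sq_sqrt (Nat.cast_nonneg (α := ℝ) n), sq_nonneg (√n - 1)]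
  have hpow : (1 : ℝ) ≤ 2 ^ l := one_le_pow₀ one_le_two
  have hnorm : ‖y‖ ≤ (2 + n) * 2 ^ l / 2 := by
    calc ‖y‖ ≤ √n * 2 ^ l := norm_le_of_mem_layer hy
      _ ≤ (2 + n) / 2 * 2 ^ l := by gcongr
      _ = (2 + n) * 2 ^ l / 2 := by ring
  have hone : 1 ≤ (2 + n) * (2 : ℝ) ^ l / 2 := by
    rw [le_div_iff₀ two_pos]
    nlinarith [Nat.cast_nonneg (α := ℝ) n]
  simpa using inv_le_mfun_of_norm_le hone hnorm

lemma mfun_le_mul_mfun_of_mem_layer {n l : ℕ} {x y : EuclideanSpace ℝ (Fin n)}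
    (hx : x ∈ layer n l) (hy : y ∈ layer n l) : mfun x ≤ (2 + n) * mfun y :=
  calc mfun x ≤ 2 / 2 ^ l := mfun_le_of_mem_layer hx
    _ = (2 + n) * (2 / ((2 + n) * 2 ^ l)) := by field_simp
    _ ≤ (2 + n) * mfun y := by gcongr; exact div_le_mfun_of_mem_layer hy

lemma cubeCenter_mem_dyadicCube (n k : ℕ) (v : Fin n → ℤ) :
    cubeCenter n k v ∈ dyadicCube n k v := by
  intro i
  have h : (0 : ℝ) < 2 ^ (-(k : ℤ)) := by positivity
  simp only [cubeCenter, mem_Ico]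
  constructor <;> nlinarith

theorem admissible_radius_in_cube_general (n : ℕ) (a : ℝ) (ha : 0 < a) (l : ℕ) (v : Fin n → ℤ)
    (hQ : dyadicCube n l v ⊆ layer n l)
    (x : EuclideanSpace ℝ (Fin n)) (hx : x ∈ dyadicCube n l v)
    (r : ℝ) (hr : r ≤ a * mfun x) :
    r ≤ (2 + n) * a * mfun (cubeCenter n l v) :=
  calc r ≤ a * mfun x := hr
    _ ≤ a * ((2 + n) * mfun (cubeCenter n l v)) := by
        gcongr
        exact mfun_le_mul_mfun_of_mem_layer (hQ hx) (hQ (cubeCenter_mem_dyadicCube n l v))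
    _ = (2 + n) * a * mfun (cubeCenter n l v) := by ring

/-- if `x ∈ Q ∈ Δ^γ_0` and `B(x,r) ∈ 𝓑_a`, then `r ≤ (2+n)·a·m(c_Q)`. -/
theorem admissible_radius_in_cube (n : ℕ) (a : ℝ) (ha : 0 < a) (l : ℕ) (v : Fin n → ℤ)
    (hQ : dyadicCube n l v ⊆ layer n l)
    (x : EuclideanSpace ℝ (Fin n)) (hx : x ∈ dyadicCube n l v)
    (r : ℝ) (hr0 : 0 ≤ r) (hr : r ≤ a * mfun x) :
    r ≤ (2 + n) * a * mfun (cubeCenter n l v) :=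
  admissible_radius_in_cube_general n a ha l v hQ x hx r hr

end
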